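/- A vertebrate family 𝒥 admits a good 2-partition if and only if it admits a good basic 2-partition. -/

import Mathlib

/-- The open real interval corresponding to an integer pair `(a, b)`. -/
def iv (p : ℤ × ℤ) : Set ℝ := Set.Ioo (p.1 : ℝ) (p.2 : ℝ)

/-- Two integer-endpoint open intervals intersect (share a point). -/
def Meets (p q : ℤ × ℤ) : Prop := (iv p ∩ iv q).Nonempty

/-- A vertebrate family: distinct open intervals with integer endpoints contained in
`[0, m]`, containing the `m` unit intervals `(i-1, i)` for `1 ≤ i ≤ m`. -/
def Vertebrate (m : ℤ) (J : Finset (ℤ × ℤ)) : Prop :=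
  (∀ p ∈ J, 0 ≤ p.1 ∧ p.1 < p.2 ∧ p.2 ≤ m) ∧
  (∀ i : ℤ, 1 ≤ i → i ≤ m → ((i - 1, i) : ℤ × ℤ) ∈ J)

/-- `Bar v R S` (written `ℛ∣𝒮`): every interval in `R` intersects at most `v`
pairwise disjoint intervals of `S` other than itself. -/
def Bar (v : ℕ) (R S : Finset (ℤ × ℤ)) : Prop :=
  ∀ p ∈ R, ∀ T ⊆ S.erase p,
    ((T : Set (ℤ × ℤ)).Pairwise fun a b => ¬ Meets a b) →
    (∀ q ∈ T, Meets p q) → T.card ≤ v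

/-- An (ordered) 2-partition of a family `S`. -/
def TwoPartition (P Q S : Finset (ℤ × ℤ)) : Prop := P ∪ Q = S ∧ Disjoint P Q

/-- A good 2-partition: each part satisfies `𝒮∣𝒮`. -/
def GoodPartition (v : ℕ) (P Q S : Finset (ℤ × ℤ)) : Prop :=
  TwoPartition P Q S ∧ Bar v P P ∧ Bar v Q Q

/-- `Jsub S l r` = the subfamily of intervals of `S` contained in `(l, r)`. -/
def Jsub (S : Finset (ℤ × ℤ)) (l r : ℤ) : Finset (ℤ × ℤ) :=
  S.filter fun p => l ≤ p.1 ∧ p.2 ≤ r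

/-- The subfamily of intervals of length at most `v`. -/
def Jle (v : ℕ) (S : Finset (ℤ × ℤ)) : Finset (ℤ × ℤ) := S.filter fun p => p.2 - p.1 ≤ (v : ℤ)

/-- The subfamily of intervals of length greater than `v`. -/
def Jgt (v : ℕ) (S : Finset (ℤ × ℤ)) : Finset (ℤ × ℤ) := S.filter fun p => (v : ℤ) < p.2 - p.1

/-- `Ksub S s` = the subfamily of intervals `(a, b) ∈ S` with `a < s < b`. -/
def Ksub (S : Finset (ℤ × ℤ)) (s : ℤ) : Finset (ℤ × ℤ) := S.filter fun p => p.1 < s ∧ s < p.2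

/-- `alphaF S l r` = maximum size of a subfamily of pairwise disjoint intervals of `S`
each of which intersects the interval `(l, r)`. -/
noncomputable def alphaF (S : Finset (ℤ × ℤ)) (l r : ℤ) : ℕ :=
  sSup {k : ℕ | ∃ T ⊆ S, T.card = k ∧
    ((T : Set (ℤ × ℤ)).Pairwise fun a b => ¬ Meets a b) ∧ ∀ p ∈ T, Meets p (l, r)}

/-- `idx v R u s` = the maximum `i ∈ [0, s]` such that `u ≤ alphaF R i s ≤ v + 1`,
or `-1` if no such index exists. -/
noncomputable def idx (v : ℕ) (R : Finset (ℤ × ℤ)) (u : ℕ) (s : ℤ) : ℤ :=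
  sSup (insert (-1) {i : ℤ | 0 ≤ i ∧ i ≤ s ∧ u ≤ alphaF R i s ∧ alphaF R i s ≤ v + 1})

/-- An `s`-monotonic sequence `r = ⟨r_0, …, r_{v+2}⟩`. -/
def SMonotonic (v : ℕ) (s : ℤ) (r : ℕ → ℤ) : Prop :=
  r 0 = s ∧ r (v + 2) = -1 ∧ (∀ u ≤ v + 1, r (u + 1) ≤ r u) ∧
  ∀ u ≤ v + 1, (r (u + 1) = -1 ∧ r u = -1) ∨ r (u + 1) < r u

/-- An `s`-monotonic sequence `r` encodes `R ⊆ 𝒥(0,s)` if `r_u = i(R, u, s)` for all `u`. -/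
def Encodes (v : ℕ) (r : ℕ → ℤ) (R : Finset (ℤ × ℤ)) (s : ℤ) : Prop :=
  ∀ u ≤ v + 2, r u = idx v R u s

/-- `alphaSeq v r i` = the maximum `u ∈ [0, v+1]` with `i ≤ r u`. -/
noncomputable def alphaSeq (v : ℕ) (r : ℕ → ℤ) (i : ℤ) : ℕ :=
  sSup {u : ℕ | u ≤ v + 1 ∧ i ≤ r u}

/-- `(l, r)` is a vertebrate range for the 2-partition `(P, Q)` of `𝒥(0,s)`:
all backbone unit intervals contained in `(l, r)` lie in the same part. -/
def VertRange (P Q : Finset (ℤ × ℤ)) (s l r : ℤ) : Prop :=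
  0 ≤ l ∧ l < r ∧ r ≤ s ∧
  ((∀ i : ℤ, l < i → i ≤ r → ((i - 1, i) : ℤ × ℤ) ∈ P) ∨
   (∀ i : ℤ, l < i → i ≤ r → ((i - 1, i) : ℤ × ℤ) ∈ Q))

/-- A maximal vertebrate range. -/
def MaxVertRange (P Q : Finset (ℤ × ℤ)) (s l r : ℤ) : Prop :=
  VertRange P Q s l r ∧
  ∀ l' r', VertRange P Q s l' r' → l' ≤ l → r ≤ r' → l' = l ∧ r' = r

/-- A 2-partition `(P, Q)` of `𝒥(0,s)` is basic if for every maximal vertebrate range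
`(l, r)` its induced 2-partition of `𝒥(l,r)` is `(𝒥_≤(l,r), 𝒥_>(l,r))` or the swap. -/
def Basic (v : ℕ) (J P Q : Finset (ℤ × ℤ)) (s : ℤ) : Prop :=
  ∀ l r : ℤ, MaxVertRange P Q s l r →
    (P ∩ Jsub J l r = Jle v (Jsub J l r) ∧ Q ∩ Jsub J l r = Jgt v (Jsub J l r)) ∨
    (P ∩ Jsub J l r = Jgt v (Jsub J l r) ∧ Q ∩ Jsub J l r = Jle v (Jsub J l r))

/-- `(p, q)` (a pair of `s`-monotonic sequences) extends `(p', q')` (a pair of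
`s'`-monotonic sequences) by the 2-partition `(E, F)` of `𝒦_{s'} ∖ 𝒦_s`. -/
def ExtendsBy (v : ℕ) (J : Finset (ℤ × ℤ)) (s' s : ℤ) (p q p' q' : ℕ → ℤ)
    (E F : Finset (ℤ × ℤ)) : Prop :=
  let D := Jgt v (Jsub J s' s)
  let w := alphaF D s' s
  let w' := alphaF (F ∪ D) s' s
  let d := (s - s').toNat
  (∀ u : ℕ, 1 ≤ u → u ≤ min d (v + 1) → p u = s - (u : ℤ)) ∧
  (∀ u : ℕ, d < u → u ≤ v + 1 → p u = p' (u - d)) ∧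
  (∀ u : ℕ, 1 ≤ u → u ≤ min w' (v + 1) → q u = idx v (F ∪ D) u s) ∧
  (∀ u : ℕ, w' < u → u ≤ v + 1 → q u = q' (u - w))

/-- The dynamic-programming predicate `Y(s, p, q, 𝒜, ℬ)`. -/
def Ypred (v : ℕ) (J : Finset (ℤ × ℤ)) (s : ℤ) (p q : ℕ → ℤ)
    (A B : Finset (ℤ × ℤ)) : Prop :=
  ∃ P Q : Finset (ℤ × ℤ), TwoPartition P Q (Jsub J 0 s) ∧
    Bar v P P ∧ Bar v Q Q ∧ Basic v J P Q s ∧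
    Encodes v p P s ∧ Encodes v q Q s ∧
    Bar v P (P ∪ A) ∧ Bar v Q (Q ∪ B) ∧
    (0 < s → ((s - 1, s) : ℤ × ℤ) ∈ P)

/-- Two intervals overlap significantly: their intersection has length at least `2v+1`. -/
def SigOverlap (v : ℕ) (p q : ℤ × ℤ) : Prop :=
  (2 * (v : ℤ) + 1) ≤ min p.2 q.2 - max p.1 q.1

/-- The significant-overlap graph `H` on a family `J`. -/
def Hgraph (v : ℕ) (J : Finset (ℤ × ℤ)) : SimpleGraph {p : ℤ × ℤ // p ∈ J} :=
  SimpleGraph.fromRel fun p q => SigOverlap v p.1 q.1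

/-- Auxiliary: all backbone cells under `q` lie in `P`. -/
def allIn (P : Finset (ℤ × ℤ)) (q : ℤ × ℤ) : Prop :=
  ∀ i : ℤ, q.1 < i → i ≤ q.2 → ((i - 1, i) : ℤ × ℤ) ∈ P

lemma meets_iff (p q : ℤ × ℤ) : Meets p q ↔ max p.1 q.1 < min p.2 q.2 := by
  unfold Meets iv
  rw [Set.Ioo_inter_Ioo, Set.nonempty_Ioo]
  constructor <;> intro h <;> exact_mod_cast h

lemma card_le_len (p : ℤ × ℤ) (T : Finset (ℤ × ℤ))
    (hpair : (T : Set (ℤ × ℤ)).Pairwise fun a b => ¬ Meets a b)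
    (hmeet : ∀ q ∈ T, Meets p q) : (T.card : ℤ) ≤ max (p.2 - p.1) 0 := by
  have key : T.card ≤ (Finset.Icc (p.1 + 1) p.2).card := by
    apply Finset.card_le_card_of_injOn (fun t => min p.2 t.2)
    · intro t ht
      have h := (meets_iff p t).1 (hmeet t ht)
      simp only [Finset.coe_Icc, Finset.mem_coe, Finset.mem_Icc, Set.mem_Icc]
      omega
    · intro t ht t' ht' he
      by_contra hne
      apply hpair ht ht' hne
      rw [meets_iff]
      have h1 := (meets_iff p t).1 (hmeet t (Finset.mem_coe.mp ht))
      have h2 := (meets_iff p t').1 (hmeet t' (Finset.mem_coe.mp ht'))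
      simp only at he
      omega
  have hc : (Finset.Icc (p.1 + 1) p.2).card = (p.2 - p.1).toNat := by
    rw [Int.card_Icc]
    congr 1
    omega
  omega

lemma bar_aux (v : ℕ) (hv : 1 ≤ v) (P X : Finset (ℤ × ℤ)) (hBar : Bar v P P)
    (hlong : ∀ p ∈ X, (v : ℤ) < p.2 - p.1 → p ∈ P)
    (hmem : ∀ t ∈ X, t ∈ P ∨ allIn P t) : Bar v X X := by
  intro p hp T hT hpair hmeet
  by_cases hshort : p.2 - p.1 ≤ (v : ℤ)
  · have h := card_le_len p T hpair hmeet
    omega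
  · have hpP : p ∈ P := hlong p hp (by omega)
    classical
    set f : ℤ × ℤ → ℤ × ℤ :=
      fun t => if t ∈ P then t else (min p.2 t.2 - 1, min p.2 t.2) with hf
    have key : ∀ t ∈ T, t.1 ≤ (f t).1 ∧ (f t).2 ≤ t.2 ∧ (f t).1 < (f t).2 ∧
        Meets p (f t) ∧ f t ∈ P ∧ f t ≠ p := by
      intro t ht
      have htX : t ∈ X := Finset.mem_of_mem_erase (hT ht)
      have htp : t ≠ p := Finset.ne_of_mem_erase (hT ht)
      have hm := (meets_iff p t).1 (hmeet t ht)
      by_cases htP : t ∈ P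
      · simp only [hf, if_pos htP]
        exact ⟨le_refl _, le_refl _, by omega, hmeet t ht, htP, htp⟩
      · have hall : allIn P t := (hmem t htX).resolve_left htP
        simp only [hf, if_neg htP]
        refine ⟨by omega, by omega, by omega, ?_, ?_, ?_⟩
        · rw [meets_iff]; simp only; omega
        · exact hall (min p.2 t.2) (by omega) (by omega)
        · intro hcontra
          rw [Prod.ext_iff] at hcontra
          obtain ⟨h1, h2⟩ := hcontra
          simp only at h1 h2
          omega
    have htrans : ∀ t ∈ T, ∀ t' ∈ T, Meets (f t) (f t') → Meets t t' := by
      intro t ht t' ht' hm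
      have k := key t ht; have k' := key t' ht'
      rw [meets_iff] at hm ⊢
      omega
    have hinj : Set.InjOn f T := by
      intro t ht t' ht' he
      by_contra hne
      apply hpair ht ht' hne
      apply htrans t (Finset.mem_coe.mp ht) t' (Finset.mem_coe.mp ht')
      rw [he]
      have k' := key t' (Finset.mem_coe.mp ht')
      rw [meets_iff]
      omega
    have hcard : (T.image f).card = T.card := Finset.card_image_of_injOn hinj
    have hsub' : T.image f ⊆ P.erase p := by
      intro x hx
      obtain ⟨t, ht, rfl⟩ := Finset.mem_image.mp hx
      have k := key t ht
      exact Finset.mem_erase.mpr ⟨k.2.2.2.2.2, k.2.2.2.2.1⟩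
    have hpair' : ((T.image f : Finset (ℤ × ℤ)) : Set (ℤ × ℤ)).Pairwise
        fun a b => ¬ Meets a b := by
      intro a ha b hb hne
      obtain ⟨t, ht, rfl⟩ := Finset.mem_image.mp (Finset.mem_coe.mp ha)
      obtain ⟨t', ht', rfl⟩ := Finset.mem_image.mp (Finset.mem_coe.mp hb)
      have hne' : t ≠ t' := fun h => hne (by rw [h])
      intro hmm
      exact hpair (Finset.mem_coe.mpr ht) (Finset.mem_coe.mpr ht') hne'
        (htrans t ht t' ht' hmm)
    have hmeet' : ∀ q ∈ T.image f, Meets p q := by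
      intro q hq
      obtain ⟨t, ht, rfl⟩ := Finset.mem_image.mp hq
      exact (key t ht).2.2.2.1
    have happ := hBar p hpP (T.image f) hsub' hpair' hmeet'
    omega

lemma mem_other (v : ℕ) (hv : 1 ≤ v) (J P Q : Finset (ℤ × ℤ))
    (hun : P ∪ Q = J) (hBar : Bar v Q Q)
    (q : ℤ × ℤ) (hq : q ∈ J) (hvalid : q.1 < q.2) (hlen : (v : ℤ) < q.2 - q.1)
    (hall : allIn Q q) : q ∈ P := by
  by_contra hqP
  have hqQ : q ∈ Q := by
    rw [← hun, Finset.mem_union] at hq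
    tauto
  set T := (Finset.Icc (q.1 + 1) q.2).image (fun i => ((i - 1, i) : ℤ × ℤ)) with hTdef
  have hmemT : ∀ x ∈ T, ∃ i : ℤ, q.1 < i ∧ i ≤ q.2 ∧ x = (i - 1, i) := by
    intro x hx
    obtain ⟨i, hi, rfl⟩ := Finset.mem_image.mp hx
    rw [Finset.mem_Icc] at hi
    exact ⟨i, by omega, by omega, rfl⟩
  have hTsub : T ⊆ Q.erase q := by
    intro x hx
    obtain ⟨i, h1, h2, rfl⟩ := hmemT x hx
    refine Finset.mem_erase.mpr ⟨?_, hall i h1 h2⟩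
    intro hcon
    rw [Prod.ext_iff] at hcon
    simp only at hcon
    omega
  have hpairT : ((T : Finset (ℤ × ℤ)) : Set (ℤ × ℤ)).Pairwise
      fun a b => ¬ Meets a b := by
    intro a ha b hb hne
    obtain ⟨i, _, _, rfl⟩ := hmemT a (Finset.mem_coe.mp ha)
    obtain ⟨j, _, _, rfl⟩ := hmemT b (Finset.mem_coe.mp hb)
    have hij : i ≠ j := by
      intro h; apply hne; rw [h]
    rw [meets_iff]
    simp only
    omega
  have hmeetT : ∀ t ∈ T, Meets q t := by
    intro t ht
    obtain ⟨i, h1, h2, rfl⟩ := hmemT t ht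
    rw [meets_iff]
    simp only
    omega
  have hcardT : T.card = (q.2 - q.1).toNat := by
    rw [hTdef, Finset.card_image_of_injective _ (fun a b h => by
      rw [Prod.ext_iff] at h; simp only at h; omega), Int.card_Icc]
    congr 1
    omega
  have := hBar q hqQ T hTsub hpairT hmeetT
  omega

/-- A vertebrate family `J` admits a good 2-partition if and only if it admits a
good basic 2-partition. -/
theorem good_iff_good_basic
    (v : ℕ) (hv : 1 ≤ v) (m : ℤ) (hm : 1 ≤ m)
    (J : Finset (ℤ × ℤ)) (hJ : Vertebrate m J) :
    (∃ P Q : Finset (ℤ × ℤ), GoodPartition v P Q J) ↔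
    (∃ P Q : Finset (ℤ × ℤ), GoodPartition v P Q J ∧ Basic v J P Q m) := by
  constructor
  · rintro ⟨P, Q, ⟨⟨hun, hdis⟩, hBP, hBQ⟩⟩
    classical
    set pred : ℤ × ℤ → Prop := fun q =>
      (allIn P q ∧ q.2 - q.1 ≤ (v : ℤ)) ∨ (allIn Q q ∧ (v : ℤ) < q.2 - q.1) ∨
      (¬ allIn P q ∧ ¬ allIn Q q ∧ q ∈ P) with hpreddef
    set P' := J.filter pred with hP'def
    set Q' := J \ P' with hQ'def
    have hvalid : ∀ p ∈ J, p.1 < p.2 := fun p hp => (hJ.1 p hp).2.1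
    have hnotboth : ∀ q : ℤ × ℤ, q.1 < q.2 → allIn P q → allIn Q q → False := by
      intro q h h1 h2
      exact (Finset.disjoint_left.mp hdis (h1 (q.1 + 1) (by omega) (by omega)))
        (h2 (q.1 + 1) (by omega) (by omega))
    have hoppP : ∀ q ∈ J, (v : ℤ) < q.2 - q.1 → allIn Q q → q ∈ P :=
      fun q hq h1 h2 => mem_other v hv J P Q hun hBQ q hq (hvalid q hq) h1 h2
    have hoppQ : ∀ q ∈ J, (v : ℤ) < q.2 - q.1 → allIn P q → q ∈ Q :=
      fun q hq h1 h2 => mem_other v hv J Q P (by rw [Finset.union_comm]; exact hun)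
        hBP q hq (hvalid q hq) h1 h2
    have memP' : ∀ q : ℤ × ℤ, q ∈ P' ↔ q ∈ J ∧ pred q := fun q => Finset.mem_filter
    have memQ' : ∀ q : ℤ × ℤ, q ∈ Q' ↔ q ∈ J ∧ q ∉ P' := fun q => Finset.mem_sdiff
    have hBarP' : Bar v P' P' := by
      apply bar_aux v hv P P' hBP
      · intro p hp hlen
        obtain ⟨hpJ, hc⟩ := (memP' p).mp hp
        rcases hc with ⟨_, h⟩ | ⟨h1, h2⟩ | ⟨_, _, h⟩
        · omega
        · exact hoppP p hpJ h2 h1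
        · exact h
      · intro t ht
        obtain ⟨htJ, hc⟩ := (memP' t).mp ht
        rcases hc with ⟨h1, _⟩ | ⟨h1, h2⟩ | ⟨_, _, h⟩
        · exact Or.inr h1
        · exact Or.inl (hoppP t htJ h2 h1)
        · exact Or.inl h
    have hBarQ' : Bar v Q' Q' := by
      apply bar_aux v hv Q Q' hBQ
      · intro p hp hlen
        obtain ⟨hpJ, hpnP'⟩ := (memQ' p).mp hp
        by_cases hP : allIn P p
        · exact hoppQ p hpJ hlen hP
        · by_cases hQ : allIn Q p
          · exact absurd ((memP' p).mpr ⟨hpJ, Or.inr (Or.inl ⟨hQ, hlen⟩)⟩) hpnP'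
          · have hpnP : p ∉ P := by
              intro hc
              exact hpnP' ((memP' p).mpr ⟨hpJ, Or.inr (Or.inr ⟨hP, hQ, hc⟩)⟩)
            rw [← hun, Finset.mem_union] at hpJ
            tauto
      · intro t ht
        obtain ⟨htJ, htnP'⟩ := (memQ' t).mp ht
        by_cases hQ : allIn Q t
        · exact Or.inr hQ
        · by_cases hP : allIn P t
          · by_cases hlen : t.2 - t.1 ≤ (v : ℤ)
            · exact absurd ((memP' t).mpr ⟨htJ, Or.inl ⟨hP, hlen⟩⟩) htnP'
            · exact Or.inl (hoppQ t htJ (by omega) hP)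
          · have htnP : t ∉ P := by
              intro hc
              exact htnP' ((memP' t).mpr ⟨htJ, Or.inr (Or.inr ⟨hP, hQ, hc⟩)⟩)
            rw [← hun, Finset.mem_union] at htJ
            tauto
    have hTP : TwoPartition P' Q' J :=
      ⟨Finset.union_sdiff_of_subset (Finset.filter_subset _ _), Finset.disjoint_sdiff⟩
    refine ⟨P', Q', ⟨hTP, hBarP', hBarQ'⟩, ?_⟩
    intro l r hM
    obtain ⟨⟨h0, hlr, hrm, hcase⟩, -⟩ := hM
    have hcellP : ∀ i : ℤ, ((i - 1, i) : ℤ × ℤ) ∈ P → allIn P ((i - 1, i) : ℤ × ℤ) := by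
      intro i hi j hj1 hj2
      simp only at hj1 hj2
      have : j = i := by omega
      rw [this]
      exact hi
    rcases hcase with hPb | hQb
    · left
      have hcells : ∀ i : ℤ, l < i → i ≤ r → ((i - 1, i) : ℤ × ℤ) ∈ P := by
        intro i h1 h2
        obtain ⟨hiJ, hc⟩ := (memP' _).mp (hPb i h1 h2)
        rcases hc with ⟨ha, _⟩ | ⟨_, hlen⟩ | ⟨_, _, h⟩
        · exact ha i (by simp) (by simp)
        · simp only at hlen; omega
        · exact h
      have hallP : ∀ q ∈ Jsub J l r, allIn P q := by
        intro q hq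
        rw [Jsub, Finset.mem_filter] at hq
        intro i hi1 hi2
        exact hcells i (by omega) (by omega)
      constructor
      · ext q
        simp only [Finset.mem_inter, Jle, Finset.mem_filter]
        constructor
        · rintro ⟨hqP', hqs⟩
          have hall := hallP q hqs
          rw [Jsub, Finset.mem_filter] at hqs
          have hqv := hvalid q hqs.1
          rcases ((memP' q).mp hqP').2 with ⟨_, h⟩ | ⟨h1, _⟩ | ⟨h1, _, _⟩
          · exact ⟨Finset.mem_filter.mpr hqs, h⟩
          · exact absurd (hnotboth q hqv hall h1) (fun h => h)
          · exact absurd hall h1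
        · rintro ⟨hqs, hshort⟩
          have hall := hallP q hqs
          have hqJ : q ∈ J := (Finset.mem_filter.mp hqs).1
          exact ⟨(memP' q).mpr ⟨hqJ, Or.inl ⟨hall, hshort⟩⟩, hqs⟩
      · ext q
        simp only [Finset.mem_inter, Jgt, Finset.mem_filter]
        constructor
        · rintro ⟨hqQ', hqs⟩
          have hall := hallP q hqs
          obtain ⟨hqJ, hqnP'⟩ := (memQ' q).mp hqQ'
          refine ⟨hqs, ?_⟩
          by_contra hlen
          exact hqnP' ((memP' q).mpr ⟨hqJ, Or.inl ⟨hall, by omega⟩⟩)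
        · rintro ⟨hqs, hlong⟩
          have hall := hallP q hqs
          have hqJ : q ∈ J := (Finset.mem_filter.mp hqs).1
          have hqv := hvalid q hqJ
          refine ⟨(memQ' q).mpr ⟨hqJ, ?_⟩, hqs⟩
          intro hqP'
          rcases ((memP' q).mp hqP').2 with ⟨_, h⟩ | ⟨h1, _⟩ | ⟨h1, _, _⟩
          · omega
          · exact hnotboth q hqv hall h1
          · exact h1 hall
    · right
      have hcells : ∀ i : ℤ, l < i → i ≤ r → ((i - 1, i) : ℤ × ℤ) ∈ Q := by
        intro i h1 h2
        obtain ⟨hiJ, hinP'⟩ := (memQ' _).mp (hQb i h1 h2)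
        have hinP : ((i - 1, i) : ℤ × ℤ) ∉ P := by
          intro hc
          exact hinP' ((memP' _).mpr ⟨hiJ, Or.inl ⟨hcellP i hc, by simp; omega⟩⟩)
        rw [← hun, Finset.mem_union] at hiJ
        tauto
      have hallQ : ∀ q ∈ Jsub J l r, allIn Q q := by
        intro q hq
        rw [Jsub, Finset.mem_filter] at hq
        intro i hi1 hi2
        exact hcells i (by omega) (by omega)
      constructor
      · ext q
        simp only [Finset.mem_inter, Jgt, Finset.mem_filter]
        constructor
        · rintro ⟨hqP', hqs⟩
          have hall := hallQ q hqs
          rw [Jsub, Finset.mem_filter] at hqs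
          have hqv := hvalid q hqs.1
          rcases ((memP' q).mp hqP').2 with ⟨h1, _⟩ | ⟨_, h⟩ | ⟨_, h1, _⟩
          · exact absurd (hnotboth q hqv h1 hall) (fun h => h)
          · exact ⟨Finset.mem_filter.mpr hqs, h⟩
          · exact absurd hall h1
        · rintro ⟨hqs, hlong⟩
          have hall := hallQ q hqs
          have hqJ : q ∈ J := (Finset.mem_filter.mp hqs).1
          exact ⟨(memP' q).mpr ⟨hqJ, Or.inr (Or.inl ⟨hall, hlong⟩)⟩, hqs⟩
      · ext q
        simp only [Finset.mem_inter, Jle, Finset.mem_filter]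
        constructor
        · rintro ⟨hqQ', hqs⟩
          have hall := hallQ q hqs
          obtain ⟨hqJ, hqnP'⟩ := (memQ' q).mp hqQ'
          refine ⟨hqs, ?_⟩
          by_contra hlen
          exact hqnP' ((memP' q).mpr ⟨hqJ, Or.inr (Or.inl ⟨hall, by omega⟩)⟩)
        · rintro ⟨hqs, hshort⟩
          have hall := hallQ q hqs
          have hqJ : q ∈ J := (Finset.mem_filter.mp hqs).1
          have hqv := hvalid q hqJ
          refine ⟨(memQ' q).mpr ⟨hqJ, ?_⟩, hqs⟩
          intro hqP'
          rcases ((memP' q).mp hqP').2 with ⟨h1, _⟩ | ⟨_, h⟩ | ⟨_, h1, _⟩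
          · exact hnotboth q hqv h1 hall
          · omega
          · exact h1 hall
  · rintro ⟨P, Q, h, -⟩
    exact ⟨P, Q, h⟩
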